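/- For every θ > 0 the following inequalities hold: (3/2)·θ + 1 < G(1/θ) < 2θ + 1, and (4 − θ)·G(1/θ) < 5θ + 4. In particular, for 0 < θ < 1 one has G(1/θ) < (5θ+4)/(4−θ). -/

import Mathlib

open MeasureTheory

noncomputable def besselK (n : ℕ) (ζ : ℝ) : ℝ :=
  ∫ t in Set.Ioi (0 : ℝ), Real.cosh ((n : ℝ) * t) * Real.exp (-ζ * Real.cosh t)

noncomputable def Gfun (ζ : ℝ) : ℝ := besselK 2 ζ / besselK 1 ζ

/-!
With `w(t) = exp (-z cosh t)`, integration by parts gives `∫₀^∞ f' w = z ∫₀^∞ f sinh w` whenever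
`f 0 = 0`. Taking `f = sinh` yields the recurrence `z K₂ = z K₀ + 2 K₁`, and taking
`f = (2 - (cosh + 1)⁻¹) sinh` expresses `z (K₂ - K₁)` through `K₁` and `∫ w / (cosh + 1)`.
Each of the three inequalities, once multiplied out, then says that `∫₀^∞ g(cosh t) w(t) dt > 0`
for an explicit `g` that is positive on `(1, ∞)`: `g(c) = c - 1`, `(c - 1)²` and
`(c - 1)² (2c + 3) / (c + 1)` respectively.
-/

open Real Set
open scoped Nat

lemma self_le_cosh_of_nonneg {t : ℝ} (ht : 0 ≤ t) : t ≤ cosh t :=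
  (self_le_sinh_iff.2 ht).trans (sinh_lt_cosh t).le

lemma abs_sinh_le_cosh (t : ℝ) : |sinh t| ≤ cosh t := by
  rw [abs_sinh, ← cosh_abs]; exact (sinh_lt_cosh _).le

lemma setIntegral_Ioi_pos {f : ℝ → ℝ} {a : ℝ} (hf : IntegrableOn f (Ioi a))
    (hpos : ∀ t > a, 0 < f t) : 0 < ∫ t in Ioi a, f t := by
  have hnonneg : 0 ≤ᵐ[volume.restrict (Ioi a)] f := by
    filter_upwards [ae_restrict_mem measurableSet_Ioi] with t ht using (hpos t ht).le
  rw [setIntegral_pos_iff_support_of_nonneg_ae hnonneg hf]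
  calc (0 : ENNReal) < volume (Ioi a) := by simp
    _ ≤ _ :=
      measure_mono (fun t ht => ⟨(hpos t ht).ne', ht⟩ : Ioi a ⊆ Function.support f ∩ Ioi a)

section CoshWeight

variable {z : ℝ}

lemma cosh_pow_mul_exp_neg_mul_cosh_le (hz : 0 < z) (n : ℕ) {t : ℝ} (ht : 0 ≤ t) :
    cosh t ^ n * exp (-z * cosh t) ≤ n ! * (2 / z) ^ n * exp (-(z / 2) * t) := by
  have hexp := pow_div_factorial_le_exp (x := z * cosh t / 2) (by positivity) n
  rw [div_le_iff₀ (by positivity)] at hexp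
  calc cosh t ^ n * exp (-z * cosh t)
      = (2 / z) ^ n * (z * cosh t / 2) ^ n * exp (-z * cosh t) := by
        rw [← mul_pow]; field_simp
    _ ≤ (2 / z) ^ n * (exp (z * cosh t / 2) * n !) * exp (-z * cosh t) := by gcongr
    _ = n ! * (2 / z) ^ n * exp (-(z / 2) * cosh t) := by
        rw [mul_comm (exp _), mul_assoc, mul_assoc, ← exp_add]; ring_nf
    _ ≤ n ! * (2 / z) ^ n * exp (-(z / 2) * t) := by
        gcongr _ * ?_
        exact exp_le_exp.2 (by nlinarith [self_le_cosh_of_nonneg ht])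

lemma integrableOn_cosh_pow_mul_exp_neg_mul_cosh (hz : 0 < z) (n : ℕ) :
    IntegrableOn (fun t => cosh t ^ n * exp (-z * cosh t)) (Ioi 0) := by
  refine ((exp_neg_integrableOn_Ioi 0 (half_pos hz)).const_mul (n ! * (2 / z) ^ n)).mono'
    (by fun_prop : Continuous _).aestronglyMeasurable ?_
  filter_upwards [ae_restrict_mem measurableSet_Ioi] with t ht
  rw [norm_of_nonneg (by positivity)]
  exact cosh_pow_mul_exp_neg_mul_cosh_le hz n (le_of_lt ht)

lemma integrableOn_mul_exp_neg_mul_cosh (hz : 0 < z) {A : ℝ → ℝ} (hA : Continuous A)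
    {C : ℝ} {n : ℕ} (hAC : ∀ t > 0, |A t| ≤ C * cosh t ^ n) :
    IntegrableOn (fun t => A t * exp (-z * cosh t)) (Ioi 0) := by
  refine ((integrableOn_cosh_pow_mul_exp_neg_mul_cosh hz n).const_mul C).mono'
    (by fun_prop : Continuous _).aestronglyMeasurable ?_
  filter_upwards [ae_restrict_mem measurableSet_Ioi] with t ht
  rw [norm_mul, norm_of_nonneg (exp_pos _).le, ← mul_assoc]
  exact mul_le_mul_of_nonneg_right (hAC t ht) (exp_pos _).le

lemma integrableOn_exp_neg_mul_cosh (hz : 0 < z) :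
    IntegrableOn (fun t => exp (-z * cosh t)) (Ioi 0) := by
  simpa using integrableOn_cosh_pow_mul_exp_neg_mul_cosh hz 0

lemma integrableOn_cosh_mul_exp_neg_mul_cosh (hz : 0 < z) :
    IntegrableOn (fun t => cosh t * exp (-z * cosh t)) (Ioi 0) := by
  simpa using integrableOn_cosh_pow_mul_exp_neg_mul_cosh hz 1

lemma integrableOn_sinh_sq_mul_exp_neg_mul_cosh (hz : 0 < z) :
    IntegrableOn (fun t => sinh t ^ 2 * exp (-z * cosh t)) (Ioi 0) :=
  integrableOn_mul_exp_neg_mul_cosh hz (C := 1) (n := 2) (by fun_prop) fun t _ => by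
    rw [one_mul, abs_pow, pow_le_pow_iff_left₀ (abs_nonneg _) (cosh_pos t).le two_ne_zero]
    exact abs_sinh_le_cosh t

lemma integrableOn_two_mul_cosh_sq_sub_one_mul_exp_neg_mul_cosh (hz : 0 < z) :
    IntegrableOn (fun t => (2 * cosh t ^ 2 - 1) * exp (-z * cosh t)) (Ioi 0) :=
  integrableOn_mul_exp_neg_mul_cosh hz (C := 2) (n := 2) (by fun_prop) fun t _ => by
    have := one_le_cosh t
    rw [abs_le]; constructor <;> nlinarith

lemma integrableOn_inv_cosh_add_one_mul_exp_neg_mul_cosh (hz : 0 < z) :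
    IntegrableOn (fun t => (cosh t + 1)⁻¹ * exp (-z * cosh t)) (Ioi 0) :=
  integrableOn_mul_exp_neg_mul_cosh hz (C := 1) (n := 0)
    ((by fun_prop : Continuous _).inv₀ fun t => by positivity) fun t _ => by
      rw [pow_zero, mul_one, abs_inv, abs_of_pos (by positivity)]
      exact inv_le_one_of_one_le₀ (by linarith [cosh_pos t])

lemma integral_deriv_mul_exp_neg_mul_cosh {f f' : ℝ → ℝ}
    (hf : ∀ t ∈ Ici (0 : ℝ), HasDerivAt f (f' t) t) (hf0 : f 0 = 0)
    (hfw : IntegrableOn (fun t => f t * exp (-z * cosh t)) (Ioi 0))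
    (hf'w : IntegrableOn (fun t => f' t * exp (-z * cosh t)) (Ioi 0))
    (hfsw : IntegrableOn (fun t => f t * sinh t * exp (-z * cosh t)) (Ioi 0)) :
    ∫ t in Ioi 0, f' t * exp (-z * cosh t) =
      z * ∫ t in Ioi 0, f t * sinh t * exp (-z * cosh t) := by
  have hderiv : ∀ t ∈ Ici (0 : ℝ), HasDerivAt (fun t => f t * exp (-z * cosh t))
      (f' t * exp (-z * cosh t) - z * (f t * sinh t * exp (-z * cosh t))) t := fun t ht =>
    ((hf t ht).mul ((hasDerivAt_cosh t).const_mul (-z)).exp).congr_deriv (by ring)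
  have hint := hf'w.sub (hfsw.const_mul z)
  -- the boundary term at `∞` vanishes since `f w` and its derivative are both integrable
  have hlim := tendsto_zero_of_hasDerivAt_of_integrableOn_Ioi
    (fun t ht => hderiv t (mem_Ici.2 (le_of_lt ht))) hint hfw
  have hFTC := integral_Ioi_of_hasDerivAt_of_tendsto' hderiv hint hlim
  rwa [integral_sub hf'w (hfsw.const_mul z), integral_const_mul, hf0, zero_mul, sub_zero,
    sub_eq_zero] at hFTC

end CoshWeight

section BesselK

variable {z : ℝ}

lemma besselK_zero_eq : besselK 0 z = ∫ t in Ioi 0, exp (-z * cosh t) := by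
  simp [besselK]

lemma besselK_one_eq : besselK 1 z = ∫ t in Ioi 0, cosh t * exp (-z * cosh t) := by
  simp [besselK]

lemma besselK_two_eq :
    besselK 2 z = ∫ t in Ioi 0, (2 * cosh t ^ 2 - 1) * exp (-z * cosh t) := by
  simp only [besselK, Nat.cast_ofNat, cosh_two_mul, sinh_sq]
  congr 1; ext t; ring

lemma besselK_one_pos (hz : 0 < z) : 0 < besselK 1 z := by
  rw [besselK_one_eq]
  exact setIntegral_Ioi_pos (integrableOn_cosh_mul_exp_neg_mul_cosh hz)
    fun t _ => mul_pos (cosh_pos t) (exp_pos _)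

lemma besselK_zero_lt_besselK_one (hz : 0 < z) : besselK 0 z < besselK 1 z := by
  have hw := integrableOn_exp_neg_mul_cosh hz
  have hcw := integrableOn_cosh_mul_exp_neg_mul_cosh hz
  rw [← sub_pos, besselK_one_eq, besselK_zero_eq, ← integral_sub hcw hw]
  refine setIntegral_Ioi_pos (hcw.sub hw) fun t ht => ?_
  rw [← sub_one_mul]
  exact mul_pos (sub_pos.2 (one_lt_cosh.2 ht.ne')) (exp_pos _)

lemma besselK_one_eq_mul_integral_sinh_sq (hz : 0 < z) :
    besselK 1 z = z * ∫ t in Ioi 0, sinh t ^ 2 * exp (-z * cosh t) := by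
  have hsw : IntegrableOn (fun t => sinh t * exp (-z * cosh t)) (Ioi 0) :=
    integrableOn_mul_exp_neg_mul_cosh hz (C := 1) (n := 1) continuous_sinh fun t _ => by
      simpa using abs_sinh_le_cosh t
  have hssw := integrableOn_sinh_sq_mul_exp_neg_mul_cosh hz
  simp only [sq] at hssw ⊢
  rw [besselK_one_eq]
  exact integral_deriv_mul_exp_neg_mul_cosh (fun t _ => hasDerivAt_sinh t) sinh_zero hsw
    (integrableOn_cosh_mul_exp_neg_mul_cosh hz) hssw

lemma mul_besselK_two (hz : 0 < z) :
    z * besselK 2 z = z * besselK 0 z + 2 * besselK 1 z := by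
  have hK2 : besselK 2 z =
      besselK 0 z + 2 * ∫ t in Ioi 0, sinh t ^ 2 * exp (-z * cosh t) := by
    rw [besselK_two_eq, besselK_zero_eq, ← integral_const_mul, ← integral_add
      (integrableOn_exp_neg_mul_cosh hz)
      ((integrableOn_sinh_sq_mul_exp_neg_mul_cosh hz).const_mul 2)]
    congr 1; ext t; rw [sinh_sq]; ring
  rw [hK2, besselK_one_eq_mul_integral_sinh_sq hz]; ring

lemma two_mul_mul_besselK_one_sub_besselK_zero_lt (hz : 0 < z) :
    2 * z * (besselK 1 z - besselK 0 z) < besselK 1 z := by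
  have hw := integrableOn_exp_neg_mul_cosh hz
  have hcw := integrableOn_cosh_mul_exp_neg_mul_cosh hz
  have hssw := integrableOn_sinh_sq_mul_exp_neg_mul_cosh hz
  have hpos : 0 < (∫ t in Ioi 0, sinh t ^ 2 * exp (-z * cosh t)) -
      2 * (besselK 1 z - besselK 0 z) := by
    have hint : IntegrableOn
        (fun t => 2 * (cosh t * exp (-z * cosh t) - exp (-z * cosh t))) (Ioi 0) :=
      (hcw.sub hw).const_mul 2
    rw [besselK_one_eq, besselK_zero_eq, ← integral_sub hcw hw, ← integral_const_mul,
      ← integral_sub hssw hint]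
    refine setIntegral_Ioi_pos (hssw.sub hint) fun t ht => ?_
    have hc : 0 < cosh t - 1 := sub_pos.2 (one_lt_cosh.2 ht.ne')
    have : sinh t ^ 2 * exp (-z * cosh t) -
        2 * (cosh t * exp (-z * cosh t) - exp (-z * cosh t)) =
        (cosh t - 1) ^ 2 * exp (-z * cosh t) := by rw [sinh_sq]; ring
    rw [this]; positivity
  have hK1 := besselK_one_eq_mul_integral_sinh_sq hz
  nlinarith [mul_pos hz hpos]

lemma hasDerivAt_two_sub_inv_cosh_add_one_mul_sinh (t : ℝ) :
    HasDerivAt (fun t => (2 - (cosh t + 1)⁻¹) * sinh t) (2 * cosh t - (cosh t + 1)⁻¹) t := by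
  have hc : cosh t + 1 ≠ 0 := by positivity
  have hq := (((hasDerivAt_cosh t).add_const 1).inv hc).const_sub 2
  refine (hq.mul (hasDerivAt_sinh t)).congr_deriv ?_
  simp only [Pi.inv_apply]
  field_simp
  rw [sinh_sq]
  ring

-- The multiplier `2 - (cosh + 1)⁻¹` is chosen so that `f sinh = (2 cosh + 1)(cosh - 1)`, which is
-- `(2 cosh² - 1) - cosh`, the integrand of `K₂ - K₁`.
lemma mul_besselK_two_sub_besselK_one (hz : 0 < z) :
    z * (besselK 2 z - besselK 1 z) =
      2 * besselK 1 z - ∫ t in Ioi 0, (cosh t + 1)⁻¹ * exp (-z * cosh t) := by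
  have hq : ∀ t, |2 - (cosh t + 1)⁻¹| ≤ 2 := fun t => by
    have hinv : (cosh t + 1)⁻¹ ≤ 1 := inv_le_one_of_one_le₀ (by linarith [cosh_pos t])
    rw [abs_le]; constructor <;> linarith [inv_pos.2 (by positivity : 0 < cosh t + 1)]
  have hfw : IntegrableOn (fun t => (2 - (cosh t + 1)⁻¹) * sinh t * exp (-z * cosh t))
      (Ioi 0) :=
    integrableOn_mul_exp_neg_mul_cosh hz (C := 2) (n := 1)
      (by fun_prop (disch := intro t; positivity)) fun t _ => by
        rw [abs_mul, pow_one]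
        exact mul_le_mul (hq t) (abs_sinh_le_cosh t) (abs_nonneg _) zero_le_two
  have hfsw : IntegrableOn
      (fun t => (2 - (cosh t + 1)⁻¹) * sinh t * sinh t * exp (-z * cosh t)) (Ioi 0) :=
    integrableOn_mul_exp_neg_mul_cosh hz (C := 2) (n := 2)
      (by fun_prop (disch := intro t; positivity)) fun t _ => by
        rw [abs_mul, abs_mul, mul_assoc, sq]
        exact mul_le_mul (hq t) (mul_le_mul (abs_sinh_le_cosh t) (abs_sinh_le_cosh t)
          (abs_nonneg _) (cosh_pos t).le) (by positivity) zero_le_two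
  have hcw := integrableOn_cosh_mul_exp_neg_mul_cosh hz
  have hvw := integrableOn_inv_cosh_add_one_mul_exp_neg_mul_cosh hz
  have hf'w : IntegrableOn (fun t => (2 * cosh t - (cosh t + 1)⁻¹) * exp (-z * cosh t))
      (Ioi 0) :=
    IntegrableOn.congr_fun ((hcw.const_mul 2).sub hvw)
      (fun t _ => by simp only [Pi.sub_apply]; ring) measurableSet_Ioi
  have hf'w_eq : ∫ t in Ioi 0, (2 * cosh t - (cosh t + 1)⁻¹) * exp (-z * cosh t) =
      2 * besselK 1 z - ∫ t in Ioi 0, (cosh t + 1)⁻¹ * exp (-z * cosh t) := by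
    rw [besselK_one_eq, ← integral_const_mul, ← integral_sub (hcw.const_mul 2) hvw]
    congr 1; ext t; ring
  have hfsw_eq : ∫ t in Ioi 0, (2 - (cosh t + 1)⁻¹) * sinh t * sinh t * exp (-z * cosh t) =
      besselK 2 z - besselK 1 z := by
    rw [besselK_two_eq, besselK_one_eq,
      ← integral_sub (integrableOn_two_mul_cosh_sq_sub_one_mul_exp_neg_mul_cosh hz) hcw]
    congr 1; ext t
    have : cosh t + 1 ≠ 0 := by positivity
    field_simp
    rw [sinh_sq]
    ring
  rw [← hfsw_eq, ← hf'w_eq]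
  exact (integral_deriv_mul_exp_neg_mul_cosh
    (fun t _ => hasDerivAt_two_sub_inv_cosh_add_one_mul_sinh t) (by simp) hfw hf'w hfsw).symm

lemma four_mul_mul_besselK_two_sub_besselK_one_lt (hz : 0 < z) :
    4 * z * (besselK 2 z - besselK 1 z) < besselK 2 z + 5 * besselK 1 z := by
  have h2w := integrableOn_two_mul_cosh_sq_sub_one_mul_exp_neg_mul_cosh hz
  have hcw := integrableOn_cosh_mul_exp_neg_mul_cosh hz
  have hvw := integrableOn_inv_cosh_add_one_mul_exp_neg_mul_cosh hz
  have h23 : IntegrableOn (fun t => (2 * cosh t ^ 2 - 1) * exp (-z * cosh t) -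
      3 * (cosh t * exp (-z * cosh t))) (Ioi 0) := h2w.sub (hcw.const_mul 3)
  have hpos : 0 < besselK 2 z - 3 * besselK 1 z +
      4 * ∫ t in Ioi 0, (cosh t + 1)⁻¹ * exp (-z * cosh t) := by
    rw [besselK_two_eq, besselK_one_eq, ← integral_const_mul, ← integral_sub h2w (hcw.const_mul 3),
      ← integral_const_mul, ← integral_add h23 (hvw.const_mul 4)]
    refine setIntegral_Ioi_pos (h23.add (hvw.const_mul 4)) fun t ht => ?_
    have hc : 0 < cosh t - 1 := sub_pos.2 (one_lt_cosh.2 ht.ne')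
    have : (2 * cosh t ^ 2 - 1) * exp (-z * cosh t) - 3 * (cosh t * exp (-z * cosh t)) +
        4 * ((cosh t + 1)⁻¹ * exp (-z * cosh t)) =
        (cosh t - 1) ^ 2 * (2 * cosh t + 3) / (cosh t + 1) * exp (-z * cosh t) := by
      have : cosh t + 1 ≠ 0 := by positivity
      field_simp
      ring
    rw [this]; positivity
  rw [mul_assoc, mul_besselK_two_sub_besselK_one hz]
  linarith

end BesselK

theorem stmt2 (θ : ℝ) (hθ : 0 < θ) :
    (3 / 2) * θ + 1 < Gfun (1 / θ) ∧ Gfun (1 / θ) < 2 * θ + 1 ∧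
    (4 - θ) * Gfun (1 / θ) < 5 * θ + 4 ∧
    (θ < 1 → Gfun (1 / θ) < (5 * θ + 4) / (4 - θ)) := by
  set z := 1 / θ with hz_def
  have hz : 0 < z := by positivity
  have hθz : θ * z = 1 := by rw [hz_def]; field_simp
  have hK1 := besselK_one_pos hz
  have hK2 : besselK 2 z = besselK 0 z + 2 * θ * besselK 1 z := by
    linear_combination θ * mul_besselK_two hz - (besselK 2 z - besselK 0 z) * hθz
  have hscale : ∀ {a b : ℝ}, z * a < b → a < θ * b := fun {a b} h =>
    calc a = θ * (z * a) := by linear_combination -a * hθz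
      _ < θ * b := mul_lt_mul_of_pos_left h hθ
  have hlow : 2 * (besselK 1 z - besselK 0 z) < θ * besselK 1 z :=
    hscale (by linarith [two_mul_mul_besselK_one_sub_besselK_zero_lt hz])
  have hthird : 4 * (besselK 2 z - besselK 1 z) < θ * (besselK 2 z + 5 * besselK 1 z) :=
    hscale (by linarith [four_mul_mul_besselK_two_sub_besselK_one_lt hz])
  have h3 : (4 - θ) * Gfun z < 5 * θ + 4 := by
    rw [Gfun, mul_div_assoc', div_lt_iff₀ hK1]; linarith
  refine ⟨?_, ?_, h3, fun hθ1 => ?_⟩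
  · rw [Gfun, lt_div_iff₀ hK1]; linarith
  · rw [Gfun, div_lt_iff₀ hK1]; linarith [besselK_zero_lt_besselK_one hz]
  · rw [lt_div_iff₀ (by linarith), mul_comm]; exact h3
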